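/- Let d ≥ 2, and for a = (a₁,...,a_d) ∈ ℤ_p^d, b = (b₁,...,b_{d−1}) ∈ ℤ_p^{d−1} let L(a,b) be the ℤ_p-Lie lattice on basis (x₀,...,x_d) with [x_i,x_j]=0, [x₀,x₁]=Σ_i a_i x_i, [x₀,x_{i+1}] = b_i x_i for i < d. For 1 < i ≤ d, the submodule I_i = ⟨x₁,...,x_{i−1}, p x_i,...,p x_d⟩ is an ideal of L(a,b) if and only if p divides a_j for all j ≥ i. -/

import Mathlib

/-!
Everything reduces to brackets of basis vectors with generators of `I_i`: the `x_k` with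
`k ≥ 1` commute with each other, and `ad x₀` maps `x_{j+1}` to `b_j x_j`, which stays
inside `I_i`, and `x₁` to `Σ a_k x_k`. The latter lies in `I_i` exactly when `p` divides the
coordinates `a_k` with `k ≥ i`, since `p` divides those coordinates of every element of `I_i`.
-/

open Submodule Set

theorem lie_mem_span_of_forall_lie_mem {R L : Type*} [CommRing R] [LieRing L] [LieAlgebra R L]
    {T S : Set L} (hT : span R T = ⊤) (hTS : ∀ t ∈ T, ∀ s ∈ S, ⁅t, s⁆ ∈ span R S)
    (u : L) {v : L} (hv : v ∈ span R S) : ⁅u, v⁆ ∈ span R S := by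
  let bracket : L →ₗ[R] L →ₗ[R] L := LinearMap.mk₂ R (⁅·, ·⁆) add_lie smul_lie lie_add lie_smul
  have hu : u ∈ span R T := hT ▸ mem_top
  have hle : map₂ bracket (span R T) (span R S) ≤ span R S := by
    rw [map₂_span_span, span_le]
    rintro _ ⟨t, ht, s, hs, rfl⟩
    exact hTS t ht s hs
  exact hle (apply_mem_map₂ bracket hu hv)

theorem Module.Basis.dvd_repr_of_mem_span {R M ι κ : Type*} [CommRing R] [AddCommGroup M]
    [Module R M] (x : Module.Basis ι R M) {e : κ → ι} (he : Function.Injective e) (c : R)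
    {P Q : κ → Prop} {v : M}
    (hv : v ∈ span R ({z | ∃ j, P j ∧ z = x (e j)} ∪ {z | ∃ j, Q j ∧ z = c • x (e j)}))
    {k : κ} (hk : ¬ P k) : c ∣ x.repr v (e k) := by
  suffices hle : span R ({z | ∃ j, P j ∧ z = x (e j)} ∪ {z | ∃ j, Q j ∧ z = c • x (e j)}) ≤
      Submodule.comap (x.coord (e k)) (Ideal.span {c}) from Ideal.mem_span_singleton.1 (hle hv)
  rw [span_le]
  rintro _ (⟨j, hj, rfl⟩ | ⟨j, -, rfl⟩) <;>
    rw [SetLike.mem_coe, mem_comap, Ideal.mem_span_singleton]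
  · have hjk : e j ≠ e k := he.ne (by rintro rfl; exact hk hj)
    simp [hjk]
  · simp

section LieLattice

variable {R L : Type*} [CommRing R] [LieRing L] [LieAlgebra R L] {d : ℕ}
  (x : Module.Basis (Fin (d + 1)) R L) (c : R) (i : ℕ)

/-- The generators `x₁, …, x_{i-1}, c x_i, …, c x_d` of the paper's `I_i`, where `x j.succ`
stands for `x_{j+1}`. -/
def idealGenerators : Set L :=
  {z | ∃ j : Fin d, (j : ℕ) + 1 < i ∧ z = x j.succ} ∪
    {z | ∃ j : Fin d, i ≤ (j : ℕ) + 1 ∧ z = c • x j.succ}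

variable {x c i}

theorem smul_succ_mem_span_idealGenerators {r : R} {k : Fin d} (hk : (k : ℕ) + 1 < i ∨ c ∣ r) :
    r • x k.succ ∈ span R (idealGenerators x c i) := by
  have hc : c • x k.succ ∈ span R (idealGenerators x c i) := by
    by_cases hki : (k : ℕ) + 1 < i
    · exact smul_mem _ _ (subset_span (Or.inl ⟨k, hki, rfl⟩))
    · exact subset_span (Or.inr ⟨k, by omega, rfl⟩)
  rcases hk with hki | ⟨s, rfl⟩
  · exact smul_mem _ _ (subset_span (Or.inl ⟨k, hki, rfl⟩))
  · rw [mul_comm, mul_smul]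
    exact smul_mem _ _ hc

theorem smul_mem_span_idealGenerators {v : L} (hv : v ∈ span R (range fun k : Fin d => x k.succ)) :
    c • v ∈ span R (idealGenerators x c i) := by
  suffices hle : span R (range fun k : Fin d => x k.succ) ≤
      (span R (idealGenerators x c i)).comap (DistribSMul.toLinearMap R L c) from hle hv
  rw [span_le]
  rintro _ ⟨k, rfl⟩
  exact smul_succ_mem_span_idealGenerators (Or.inr dvd_rfl)

variable {a : Fin d → R} {b : Fin (d - 1) → R} (hd : 0 < d)
  (h1 : ⁅x 0, x (Fin.succ ⟨0, hd⟩)⁆ = ∑ k : Fin d, a k • x k.succ)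
  (h2 : ∀ (m : ℕ) (h : m + 1 < d),
    ⁅x 0, x (Fin.succ ⟨m + 1, h⟩)⁆ =
      b ⟨m, Nat.lt_sub_of_add_lt h⟩ • x (Fin.succ ⟨m, Nat.lt_of_succ_lt h⟩))
include h1 h2

theorem lie_zero_succ_mem_span_succ (j : Fin d) :
    ⁅x 0, x j.succ⁆ ∈ span R (range fun k : Fin d => x k.succ) := by
  obtain ⟨_ | m, hm⟩ := j
  · rw [h1]
    exact sum_mem fun k _ => smul_mem _ _ (subset_span (mem_range_self k))
  · rw [h2 m hm]
    exact smul_mem _ _ (subset_span (mem_range_self _))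

theorem lie_zero_mem_span_idealGenerators (hdvd : ∀ j : Fin d, i ≤ (j : ℕ) + 1 → c ∣ a j)
    {s : L} (hs : s ∈ idealGenerators x c i) : ⁅x 0, s⁆ ∈ span R (idealGenerators x c i) := by
  rcases hs with ⟨⟨_ | m, hm⟩, hmi, rfl⟩ | ⟨j, -, rfl⟩
  · rw [h1]
    refine sum_mem fun k _ => smul_succ_mem_span_idealGenerators ?_
    by_cases hki : (k : ℕ) + 1 < i
    · exact Or.inl hki
    · exact Or.inr (hdvd k (by omega))
  · rw [h2 m hm]
    exact smul_succ_mem_span_idealGenerators (Or.inl (by simp only at hmi ⊢; omega))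
  · rw [lie_smul]
    exact smul_mem_span_idealGenerators (lie_zero_succ_mem_span_succ hd h1 h2 j)

theorem lie_mem_span_idealGenerators (habel : ∀ j k : Fin d, ⁅x j.succ, x k.succ⁆ = 0)
    (hdvd : ∀ j : Fin d, i ≤ (j : ℕ) + 1 → c ∣ a j) (u : L) {v : L}
    (hv : v ∈ span R (idealGenerators x c i)) : ⁅u, v⁆ ∈ span R (idealGenerators x c i) := by
  refine lie_mem_span_of_forall_lie_mem x.span_eq ?_ u hv
  rintro _ ⟨n, rfl⟩ s hs
  induction n using Fin.cases with
  | zero => exact lie_zero_mem_span_idealGenerators hd h1 h2 hdvd hs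
  | succ k =>
    rcases hs with ⟨j, -, rfl⟩ | ⟨j, -, rfl⟩ <;> simp [habel]

omit h2 in
theorem dvd_of_forall_lie_mem_span_idealGenerators (hi : 1 < i)
    (hideal : ∀ u : L, ∀ v ∈ span R (idealGenerators x c i),
      ⁅u, v⁆ ∈ span R (idealGenerators x c i))
    (j : Fin d) (hj : i ≤ (j : ℕ) + 1) : c ∣ a j := by
  have hx1 : x (Fin.succ ⟨0, hd⟩) ∈ span R (idealGenerators x c i) :=
    subset_span (Or.inl ⟨_, hi, rfl⟩)
  have hsum := hideal (x 0) _ hx1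
  rw [h1] at hsum
  have hrepr := x.dvd_repr_of_mem_span (Fin.succ_injective d) c hsum (k := j) (by omega)
  simpa [Finsupp.single_apply, Fin.succ_inj] using hrepr

end LieLattice

/-- Let `d ≥ 2` and `L(a,b)` be the `ℤ_p`-Lie lattice on basis
`(x₀,…,x_d)` with `[x_i,x_j]=0`, `[x₀,x₁]=Σ_i a_i x_i`, `[x₀,x_{i+1}] = b_i x_i`
for `i < d`. For `1 < i ≤ d`, the submodule
`I_i = ⟨x₁,…,x_{i−1}, p x_i,…,p x_d⟩` is an ideal of `L(a,b)` iff `p ∣ a_j` for all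
`j ≥ i`. (Here the abelian part is indexed by `Fin d`, with `x j.succ` the paper's
`x_{j+1}`.) -/
theorem stmt_17 (p : ℕ) [Fact p.Prime] (d : ℕ) (hd : 2 ≤ d)
    (a : Fin d → ℤ_[p]) (b : Fin (d - 1) → ℤ_[p])
    (L : Type*) [LieRing L] [LieAlgebra ℤ_[p] L]
    (x : Module.Basis (Fin (d + 1)) ℤ_[p] L)
    (habel : ∀ i j : Fin d, ⁅x i.succ, x j.succ⁆ = 0)
    (h1 : ⁅x (0 : Fin (d + 1)), x (Fin.succ ⟨0, by omega⟩)⁆ = ∑ i : Fin d, a i • x i.succ)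
    (h2 : ∀ (i : ℕ) (h : i + 1 < d),
      ⁅x (0 : Fin (d + 1)), x (Fin.succ ⟨i + 1, h⟩)⁆ =
        b ⟨i, by omega⟩ • x (Fin.succ ⟨i, by omega⟩))
    (i : ℕ) (hi1 : 1 < i)
    (I : Submodule ℤ_[p] L)
    (hI : I = Submodule.span ℤ_[p]
      ({z : L | ∃ j : Fin d, (j : ℕ) + 1 < i ∧ z = x j.succ} ∪
       {z : L | ∃ j : Fin d, i ≤ (j : ℕ) + 1 ∧ z = (p : ℤ_[p]) • x j.succ})) :
    (∀ u : L, ∀ v ∈ I, ⁅u, v⁆ ∈ I) ↔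
      ∀ j : Fin d, i ≤ (j : ℕ) + 1 → (p : ℤ_[p]) ∣ a j := by
  have hd0 : 0 < d := by omega
  change I = span ℤ_[p] (idealGenerators x (p : ℤ_[p]) i) at hI
  subst hI
  exact ⟨dvd_of_forall_lie_mem_span_idealGenerators hd0 h1 hi1,
    lie_mem_span_idealGenerators hd0 h1 h2 habel⟩
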